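/- arXiv:math/0311314 — 5 statements merged into one kernel-verified Lean document; each statement's English description precedes it below -/
import Mathlib

section
/- Let ℓ be a positive integer. For every τ ∈ ℍ and all ν, μ ∈ ℂ with 0 < Im(ν+μ) < Im τ, both double series below converge absolutely and K_ℓ(τ,ν,μ) = Σ_{m≥0} Σ_{n≥0} e^{iπ m² ℓ τ + 2iπ m n τ + 2iπ(mℓ+n)ν + 2iπ n μ} − Σ_{m≤−1} Σ_{n≤−1} e^{iπ m² ℓ τ + 2iπ m n τ + 2iπ(mℓ+n)ν + 2iπ n μ}. -/
open Complex Real MeasureTheory Finset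

noncomputable def appellK (ℓ : ℕ) (τ ν μ : ℂ) : ℂ :=
  ∑' m : ℤ,
    Complex.exp ((π : ℂ) * I * (m : ℂ) ^ 2 * ℓ * τ +
        2 * (π : ℂ) * I * (m : ℂ) * ℓ * ν) /
      (1 - Complex.exp (2 * (π : ℂ) * I * (ν + μ + (m : ℂ) * τ)))

noncomputable def theta (τ ν : ℂ) : ℂ :=
  ∑' m : ℤ, Complex.exp ((π : ℂ) * I * (m : ℂ) ^ 2 * τ + 2 * (π : ℂ) * I * (m : ℂ) * ν)

noncomputable def PhiFun (τ μ : ℂ) : ℂ :=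
  -I / (2 * (-I * τ) ^ (1/2 : ℂ)) -
    (1/2) * ∫ x : ℝ, Complex.exp (-(π : ℂ) * (x : ℂ) ^ 2) *
      (Complex.sinh ((π : ℂ) * (x : ℂ) * (-I * τ) ^ (1/2 : ℂ) * (1 + 2 * μ / τ)) /
       Complex.sinh ((π : ℂ) * (x : ℂ) * (-I * τ) ^ (1/2 : ℂ)))

noncomputable def theta10 (τ ν : ℂ) : ℂ :=
  ∑' m : ℤ, Complex.exp ((π : ℂ) * I * ((m : ℂ) ^ 2 - (m : ℂ)) * τ - 2 * (π : ℂ) * I * (m : ℂ) * ν)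

noncomputable def theta11 (τ ν : ℂ) : ℂ :=
  ∑' m : ℤ, (-1 : ℂ) ^ m *
    Complex.exp ((π : ℂ) * I * ((m : ℂ) ^ 2 - (m : ℂ)) * τ - 2 * (π : ℂ) * I * (m : ℂ) * ν)

noncomputable def etaF (τ : ℂ) : ℂ :=
  Complex.exp ((π : ℂ) * I * τ / 12) * ∏' m : ℕ, (1 - Complex.exp (2 * (π : ℂ) * I * ((m : ℂ) + 1) * τ))

noncomputable def thetaHL (r : ℤ) (ℓ : ℕ) (τ ν : ℂ) : ℂ :=
  ∑' n : ℤ, Complex.exp (2 * (π : ℂ) * I * ℓ *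
    ((((n : ℂ) + (r : ℂ) / (2 * ℓ)) ^ 2) * τ + ((n : ℂ) + (r : ℂ) / (2 * ℓ)) * ν))

noncomputable def zetaCD (c d : ℤ) : ℂ :=
  if Even c then Complex.exp ((π : ℂ) * I * ((d : ℂ) - 1) / 4) * (jacobiSym c d.natAbs : ℂ)
  else Complex.exp (-(π : ℂ) * I * (c : ℂ) / 4) * (jacobiSym d c.natAbs : ℂ)

noncomputable def appellTerm (ℓ : ℕ) (τ ν μ : ℂ) (m n : ℤ) : ℂ :=
  Complex.exp ((π : ℂ) * I * (m : ℂ) ^ 2 * ℓ * τ + 2 * (π : ℂ) * I * (m : ℂ) * (n : ℂ) * τ +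
    2 * (π : ℂ) * I * ((m : ℂ) * ℓ + (n : ℂ)) * ν + 2 * (π : ℂ) * I * (n : ℂ) * μ)

/-! Each summand of `K_ℓ` is `a / (1 - q)` with `a` a theta term and `q = e^{2πi(ν+μ+mτ)}`.
For `m ≥ 0` one has `|q| < 1` and expands geometrically in `q`; for `m < 0` one has `|q| > 1` and
expands in `q⁻¹`, which gives `-∑_{n ≤ -1} a qⁿ`. Since `|q|` is bounded away from `1` uniformly on
each half of `ℤ` and the theta terms are absolutely summable, both double series converge
absolutely and may be summed fibrewise. -/

section GeometricExpansion

variable {𝕜 : Type*} [NormedField 𝕜]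

lemma hasSum_mul_zpow_natCast_of_norm_lt_one (a : 𝕜) {q : 𝕜} (hq : ‖q‖ < 1) :
    HasSum (fun n : ℕ => a * q ^ (n : ℤ)) (a / (1 - q)) := by
  simpa only [zpow_natCast, div_eq_mul_inv] using (hasSum_geometric_of_norm_lt_one hq).mul_left a

lemma hasSum_mul_zpow_neg_sub_one_of_one_lt_norm (a : 𝕜) {q : 𝕜} (hq : 1 < ‖q‖) :
    HasSum (fun n : ℕ => a * q ^ (-(n : ℤ) - 1)) (-(a / (1 - q))) := by
  have hq₀ : q ≠ 0 := norm_pos_iff.mp (one_pos.trans hq)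
  have hq₁ : q - 1 ≠ 0 := sub_ne_zero.mpr fun h => by simp [h] at hq
  have hinv : ‖q⁻¹‖ < 1 := by rw [norm_inv]; exact inv_lt_one_of_one_lt₀ hq
  convert (hasSum_mul_zpow_natCast_of_norm_lt_one (a * q⁻¹) hinv) using 1
  · ext n
    rw [zpow_sub₀ hq₀, zpow_neg, zpow_one, inv_zpow]
    ring
  · rw [← div_neg, neg_sub]
    field_simp

lemma summable_prod_mul_pow_of_norm_le [CompleteSpace 𝕜] {a q : ℕ → 𝕜} {r : ℝ}
    (ha : Summable fun m => ‖a m‖) (hr : r < 1) (hq : ∀ m, ‖q m‖ ≤ r) :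
    Summable fun p : ℕ × ℕ => a p.1 * q p.1 ^ p.2 := by
  have hr₀ : 0 ≤ r := (norm_nonneg _).trans (hq 0)
  refine Summable.of_norm_bounded
    (ha.mul_of_nonneg (summable_geometric_of_lt_one hr₀ hr) (fun _ => norm_nonneg _)
      (fun n => pow_nonneg hr₀ n)) fun p => ?_
  rw [norm_mul, norm_pow]
  gcongr
  exact hq p.1

end GeometricExpansion

section SplitAtZero

variable {𝕜 : Type*} [NormedField 𝕜] [CompleteSpace 𝕜] {a q : ℤ → 𝕜}

lemma summable_prod_mul_zpow_natCast {r : ℝ} (ha : Summable fun m => ‖a m‖) (hr : r < 1)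
    (hq : ∀ m : ℕ, ‖q m‖ ≤ r) :
    Summable fun p : ℕ × ℕ => a p.1 * q p.1 ^ (p.2 : ℤ) := by
  simpa only [zpow_natCast] using
    summable_prod_mul_pow_of_norm_le (ha.comp_injective Nat.cast_injective) hr hq

lemma summable_prod_mul_zpow_neg_sub_one {R : ℝ} (ha : Summable fun m => ‖a m‖) (hR : 1 < R)
    (hq : ∀ m : ℕ, R ≤ ‖q (-(m : ℤ) - 1)‖) :
    Summable fun p : ℕ × ℕ => a (-(p.1 : ℤ) - 1) * q (-(p.1 : ℤ) - 1) ^ (-(p.2 : ℤ) - 1) := by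
  have hR₀ : 0 < R := one_pos.trans hR
  have hq₀ (m : ℕ) : q (-(m : ℤ) - 1) ≠ 0 := norm_pos_iff.mp (hR₀.trans_le (hq m))
  have hinj : Function.Injective fun m : ℕ => -(m : ℤ) - 1 := fun m n h => by simpa using h
  have ha' : Summable fun m : ℕ => ‖a (-(m : ℤ) - 1) * (q (-(m : ℤ) - 1))⁻¹‖ := by
    refine (ha.comp_injective hinj).mul_right R⁻¹ |>.of_nonneg_of_le (fun _ => norm_nonneg _) ?_
    intro m
    rw [norm_mul, norm_inv]
    exact mul_le_mul_of_nonneg_left (inv_anti₀ hR₀ (hq m)) (norm_nonneg _)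
  have hq' (m : ℕ) : ‖(q (-(m : ℤ) - 1))⁻¹‖ ≤ R⁻¹ := by
    rw [norm_inv]
    gcongr
    exact hq m
  convert summable_prod_mul_pow_of_norm_le ha' (inv_lt_one_of_one_lt₀ hR) hq' using 2 with p
  rw [zpow_sub₀ (hq₀ p.1), zpow_neg, zpow_one, zpow_natCast, inv_pow]
  ring

theorem tsum_div_one_sub_eq_tsum_prod_sub_tsum_prod {r R : ℝ} (ha : Summable fun m => ‖a m‖)
    (hr : r < 1) (hR : 1 < R) (hq_nonneg : ∀ m : ℕ, ‖q m‖ ≤ r)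
    (hq_neg : ∀ m : ℕ, R ≤ ‖q (-(m : ℤ) - 1)‖) :
    ∑' m, a m / (1 - q m) =
      (∑' p : ℕ × ℕ, a p.1 * q p.1 ^ (p.2 : ℤ)) -
        ∑' p : ℕ × ℕ, a (-(p.1 : ℤ) - 1) * q (-(p.1 : ℤ) - 1) ^ (-(p.2 : ℤ) - 1) := by
  have h_nonneg : HasSum (fun m : ℕ => a m / (1 - q m))
      (∑' p : ℕ × ℕ, a p.1 * q p.1 ^ (p.2 : ℤ)) :=
    (summable_prod_mul_zpow_natCast ha hr hq_nonneg).hasSum.prod_fiberwise fun m =>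
      hasSum_mul_zpow_natCast_of_norm_lt_one (a m) ((hq_nonneg m).trans_lt hr)
  have h_neg : HasSum (fun m : ℕ => -(a (-(m : ℤ) - 1) / (1 - q (-(m : ℤ) - 1))))
      (∑' p : ℕ × ℕ, a (-(p.1 : ℤ) - 1) * q (-(p.1 : ℤ) - 1) ^ (-(p.2 : ℤ) - 1)) :=
    (summable_prod_mul_zpow_neg_sub_one ha hR hq_neg).hasSum.prod_fiberwise fun m =>
      hasSum_mul_zpow_neg_sub_one_of_one_lt_norm _ (hR.trans_le (hq_neg m))
  rw [sub_eq_add_neg]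
  refine (HasSum.of_nat_of_neg_add_one (f := fun m : ℤ => a m / (1 - q m)) h_nonneg ?_).tsum_eq
  simpa only [neg_add', neg_neg] using h_neg.neg

end SplitAtZero

lemma Complex.norm_exp_two_pi_I_mul (z : ℂ) : ‖cexp (2 * π * I * z)‖ = rexp (-(2 * π * z.im)) := by
  simp [Complex.norm_exp]

lemma norm_exp_two_pi_I_add_natCast_mul_le (w : ℂ) {τ : ℂ} (hτ : 0 ≤ τ.im) (m : ℕ) :
    ‖cexp (2 * π * I * (w + ((m : ℤ) : ℂ) * τ))‖ ≤ rexp (-(2 * π * w.im)) := by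
  rw [Complex.norm_exp_two_pi_I_mul, Real.exp_le_exp, neg_le_neg_iff]
  gcongr
  simpa using mul_nonneg m.cast_nonneg hτ

lemma exp_le_norm_exp_two_pi_I_add_neg_sub_one_mul (w : ℂ) {τ : ℂ} (hτ : 0 ≤ τ.im) (m : ℕ) :
    rexp (-(2 * π * (w.im - τ.im))) ≤ ‖cexp (2 * π * I * (w + ((-(m : ℤ) - 1 : ℤ) : ℂ) * τ))‖ := by
  rw [Complex.norm_exp_two_pi_I_mul, Real.exp_le_exp, neg_le_neg_iff]
  gcongr
  simp only [Int.cast_sub, Int.cast_neg, Int.cast_natCast, Int.cast_one, add_im, mul_im, sub_re,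
    neg_re, natCast_re, one_re, sub_im, neg_im, natCast_im, one_im, neg_zero, sub_zero, zero_mul,
    add_zero]
  nlinarith [mul_nonneg m.cast_nonneg hτ]

lemma appellTerm_eq_mul_zpow (ℓ : ℕ) (τ ν μ : ℂ) (m n : ℤ) :
    appellTerm ℓ τ ν μ m n =
      jacobiTheta₂_term m (ℓ * ν) (ℓ * τ) * cexp (2 * π * I * (ν + μ + m * τ)) ^ n := by
  rw [appellTerm, jacobiTheta₂_term, ← Complex.exp_int_mul, ← Complex.exp_add]
  ring_nf

lemma appellK_eq_tsum_div (ℓ : ℕ) (τ ν μ : ℂ) :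
    appellK ℓ τ ν μ = ∑' m : ℤ,
      jacobiTheta₂_term m (ℓ * ν) (ℓ * τ) / (1 - cexp (2 * π * I * (ν + μ + m * τ))) := by
  refine tsum_congr fun m => ?_
  rw [jacobiTheta₂_term]
  ring_nf

theorem appellK_double_series (ℓ : ℕ) (hℓ : 0 < ℓ) (τ ν μ : ℂ) (hτ : 0 < τ.im)
    (h1 : 0 < (ν + μ).im) (h2 : (ν + μ).im < τ.im) :
    Summable (fun p : ℕ × ℕ => appellTerm ℓ τ ν μ (p.1 : ℤ) (p.2 : ℤ)) ∧
    Summable (fun p : ℕ × ℕ => appellTerm ℓ τ ν μ (-(p.1 : ℤ) - 1) (-(p.2 : ℤ) - 1)) ∧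
    appellK ℓ τ ν μ =
      (∑' p : ℕ × ℕ, appellTerm ℓ τ ν μ (p.1 : ℤ) (p.2 : ℤ)) -
      ∑' p : ℕ × ℕ, appellTerm ℓ τ ν μ (-(p.1 : ℤ) - 1) (-(p.2 : ℤ) - 1) := by
  have ha : Summable fun m : ℤ => ‖jacobiTheta₂_term m (ℓ * ν) (ℓ * τ)‖ :=
    summable_norm_iff.mpr <| (summable_jacobiTheta₂_term_iff _ _).mpr <| by
      simpa using mul_pos (Nat.cast_pos.mpr hℓ) hτ
  have hr : rexp (-(2 * π * (ν + μ).im)) < 1 := by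
    rw [Real.exp_lt_one_iff]
    nlinarith [pi_pos]
  have hR : 1 < rexp (-(2 * π * ((ν + μ).im - τ.im))) := by
    rw [Real.one_lt_exp_iff]
    nlinarith [pi_pos]
  set q : ℤ → ℂ := fun m => cexp (2 * π * I * (ν + μ + m * τ))
  have hq_nonneg (m : ℕ) : ‖q m‖ ≤ _ := norm_exp_two_pi_I_add_natCast_mul_le (ν + μ) hτ.le m
  have hq_neg (m : ℕ) : _ ≤ ‖q (-(m : ℤ) - 1)‖ :=
    exp_le_norm_exp_two_pi_I_add_neg_sub_one_mul (ν + μ) hτ.le m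
  have hS_nonneg := summable_prod_mul_zpow_natCast ha hr hq_nonneg
  have hS_neg := summable_prod_mul_zpow_neg_sub_one ha hR hq_neg
  have hK := tsum_div_one_sub_eq_tsum_prod_sub_tsum_prod ha hr hR hq_nonneg hq_neg
  simp only [appellTerm_eq_mul_zpow, appellK_eq_tsum_div]
  exact ⟨hS_nonneg, hS_neg, hK⟩
end

section
/- Let ℓ be a positive integer, τ ∈ ℍ, and ν, μ ∈ ℂ with ν+μ ∉ ℤτ+ℤ. Then K_ℓ(τ, ν, μ) = −K_ℓ(τ, −ν, −μ) + ϑ(ℓτ, ℓν), and K_ℓ(τ, ν, μ) = −e^{−2iπ(ν+μ)} K_ℓ(τ, −ν + τ/ℓ, −μ − τ/ℓ). -/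
open Complex Real MeasureTheory Finset

/-!
Both identities hold termwise after the reflection `m ↦ -m` of the summation index. Writing
`q = e^{2iπ(ν+μ+mτ)}`, the reflection turns the pole factor of `K_ℓ(τ, -ν, -μ)` into
`1 - q⁻¹`, and `A / (1 - q⁻¹) = A - A / (1 - q)`; summing the numerators `A` gives
`ϑ(ℓτ, ℓν)`. For the second identity the shift by `τ / ℓ` multiplies the numerator by
`e^{2iπ(ν+μ)} q⁻¹`, and `-(A q⁻¹) / (1 - q⁻¹) = A / (1 - q)`. Splitting the sum in the first
identity needs summability, which holds because `1 / (1 - q)` stays bounded as `m → ±∞`.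
-/

open Filter Asymptotics

lemma div_one_sub_inv (A : ℂ) {q : ℂ} (h0 : q ≠ 0) (h1 : q ≠ 1) :
    A / (1 - q⁻¹) = A - A / (1 - q) := by
  field_simp
  ring

lemma neg_mul_inv_div_one_sub_inv (A : ℂ) {q : ℂ} (h0 : q ≠ 0) :
    -(A * q⁻¹) / (1 - q⁻¹) = A / (1 - q) := by
  rw [← mul_div_mul_right _ _ h0, neg_mul, inv_mul_cancel_right₀ h0, sub_mul,
    inv_mul_cancel₀ h0, one_mul, neg_div, ← div_neg, neg_sub]

lemma theta_eq_jacobiTheta₂ (τ ν : ℂ) : theta τ ν = jacobiTheta₂ ν τ :=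
  tsum_congr fun m => by rw [jacobiTheta₂_term]; ring_nf

lemma appellK_eq_tsum (ℓ : ℕ) (τ ν μ : ℂ) :
    appellK ℓ τ ν μ = ∑' m : ℤ, jacobiTheta₂_term m (ℓ * ν) (ℓ * τ) /
      (1 - Complex.exp (2 * π * I * (ν + μ + m * τ))) :=
  tsum_congr fun m => by rw [jacobiTheta₂_term]; ring_nf

lemma exp_two_pi_I_mul_ne_one {τ w : ℂ} (h : ∀ m n : ℤ, w ≠ m * τ + n) (m : ℤ) :
    Complex.exp (2 * π * I * (w + m * τ)) ≠ 1 := by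
  rw [Ne, Complex.exp_eq_one_iff]
  rintro ⟨n, hn⟩
  refine h (-m) n ?_
  have : w + m * τ = n := mul_left_cancel₀ two_pi_I_ne_zero (by linear_combination hn)
  push_cast
  linear_combination this

lemma isBigO_one_sub_exp_inv {τ : ℂ} (hτ : 0 < τ.im) (w : ℂ) :
    (fun m : ℤ => (1 - Complex.exp (2 * π * I * (w + m * τ)))⁻¹) =O[cofinite]
      fun _ => (1 : ℂ) := by
  have hre : (fun m : ℤ => (2 * π * I * (w + m * τ)).re) =
      fun m : ℤ => -2 * π * w.im + -(2 * π * τ.im) * m := by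
    ext m
    simp only [mul_re, mul_im, add_re, add_im, ofReal_re, ofReal_im, I_re, I_im, intCast_re,
      intCast_im, re_ofNat, im_ofNat]
    ring
  have hslope : -(2 * π * τ.im) < 0 := by linarith [mul_pos (mul_pos two_pos pi_pos) hτ]
  rw [Int.cofinite_eq, isBigO_sup]
  constructor
  · have harg : Tendsto (fun m : ℤ => 2 * π * I * (w + m * τ)) atBot (comap re atTop) := by
      rw [tendsto_comap_iff, Function.comp_def, hre]
      exact tendsto_atTop_add_const_left _ _
        ((tendsto_const_mul_atTop_of_neg hslope).mpr (tendsto_intCast_atBot_iff.mpr tendsto_id))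
    exact (tendsto_inv₀_cobounded.comp ((tendsto_const_sub_cobounded 1).comp
      (tendsto_exp_comap_re_atTop.comp harg))).isBigO_one ℂ
  · have harg : Tendsto (fun m : ℤ => 2 * π * I * (w + m * τ)) atTop (comap re atBot) := by
      rw [tendsto_comap_iff, Function.comp_def, hre]
      exact tendsto_atBot_add_const_left _ _
        ((tendsto_const_mul_atBot_of_neg hslope).mpr tendsto_intCast_atTop_atTop)
    have hexp := tendsto_exp_comap_re_atBot.comp harg
    exact ((tendsto_const_nhds.sub hexp).inv₀ (by simp)).isBigO_one ℂ

lemma summable_div_one_sub_exp {a : ℤ → ℂ} (ha : Summable a) {τ : ℂ} (hτ : 0 < τ.im) (w : ℂ) :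
    Summable fun m : ℤ => a m / (1 - Complex.exp (2 * π * I * (w + m * τ))) := by
  refine summable_of_isBigO ha.norm ?_
  simpa only [div_eq_mul_inv, mul_one] using
    ((isBigO_refl a cofinite).mul (isBigO_one_sub_exp_inv hτ w)).norm_right

theorem appellK_neg_neg {ℓ : ℕ} (hℓ : 0 < ℓ) {τ : ℂ} (hτ : 0 < τ.im) {ν μ : ℂ}
    (h : ∀ m n : ℤ, ν + μ ≠ m * τ + n) :
    appellK ℓ τ (-ν) (-μ) = theta (ℓ * τ) (ℓ * ν) - appellK ℓ τ ν μ := by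
  have hℓτ : 0 < ((ℓ : ℂ) * τ).im := by
    simpa using mul_pos (Nat.cast_pos.mpr hℓ) hτ
  have hθ := (summable_jacobiTheta₂_term_iff (ℓ * ν) (ℓ * τ)).mpr hℓτ
  rw [theta_eq_jacobiTheta₂, jacobiTheta₂, appellK_eq_tsum, appellK_eq_tsum,
    ← hθ.tsum_sub (summable_div_one_sub_exp hθ hτ _), ← (Equiv.neg ℤ).tsum_eq]
  refine tsum_congr fun m => ?_
  have hnum : jacobiTheta₂_term (-m) (ℓ * -ν) (ℓ * τ) = jacobiTheta₂_term m (ℓ * ν) (ℓ * τ) := by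
    simp only [jacobiTheta₂_term, Int.cast_neg]
    ring_nf
  have hden : Complex.exp (2 * π * I * (-ν + -μ + (-m : ℤ) * τ)) =
      (Complex.exp (2 * π * I * (ν + μ + m * τ)))⁻¹ := by
    rw [← Complex.exp_neg]
    push_cast
    ring_nf
  rw [Equiv.neg_apply, hnum, hden,
    div_one_sub_inv _ (Complex.exp_ne_zero _) (exp_two_pi_I_mul_ne_one h m)]

theorem appellK_eq_neg_exp_mul_appellK {ℓ : ℕ} (hℓ : ℓ ≠ 0) (τ ν μ : ℂ) :
    appellK ℓ τ ν μ =
      -Complex.exp (-2 * π * I * (ν + μ)) * appellK ℓ τ (-ν + τ / ℓ) (-μ - τ / ℓ) := by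
  rw [appellK_eq_tsum, appellK_eq_tsum, ← tsum_mul_left]
  conv_rhs => rw [← (Equiv.neg ℤ).tsum_eq]
  refine tsum_congr fun m => ?_
  set q := Complex.exp (2 * π * I * (ν + μ + m * τ))
  have hnum : jacobiTheta₂_term (-m) (ℓ * (-ν + τ / ℓ)) (ℓ * τ) =
      Complex.exp (2 * π * I * (ν + μ)) * (jacobiTheta₂_term m (ℓ * ν) (ℓ * τ) * q⁻¹) := by
    simp only [q, jacobiTheta₂_term, ← Complex.exp_neg, ← Complex.exp_add, Int.cast_neg]
    congr 1
    field_simp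
    ring
  have hden : Complex.exp (2 * π * I * (-ν + τ / ℓ + (-μ - τ / ℓ) + (-m : ℤ) * τ)) = q⁻¹ := by
    rw [← Complex.exp_neg]
    push_cast
    ring_nf
  rw [Equiv.neg_apply, hnum, hden, mul_div_assoc, ← mul_assoc, neg_mul, ← Complex.exp_add,
    (by ring : -2 * π * I * (ν + μ) + 2 * π * I * (ν + μ) = 0), Complex.exp_zero, neg_one_mul,
    ← neg_div, neg_mul_inv_div_one_sub_inv _ (Complex.exp_ne_zero _)]

theorem appellK_inversion (ℓ : ℕ) (hℓ : 0 < ℓ) (τ ν μ : ℂ) (hτ : 0 < τ.im)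
    (h : ∀ m n : ℤ, ν + μ ≠ (m : ℂ) * τ + (n : ℂ)) :
    appellK ℓ τ ν μ = -appellK ℓ τ (-ν) (-μ) + theta ((ℓ : ℂ) * τ) ((ℓ : ℂ) * ν) ∧
    appellK ℓ τ ν μ =
      -Complex.exp (-2 * (π : ℂ) * I * (ν + μ)) *
        appellK ℓ τ (-ν + τ / (ℓ : ℂ)) (-μ - τ / (ℓ : ℂ)) :=
  ⟨by rw [appellK_neg_neg hℓ hτ h]; ring, appellK_eq_neg_exp_mul_appellK hℓ.ne' τ ν μ⟩
end

section
/- Let ℓ and u be coprime positive integers and set r̄(n) = ⌊ℓn/u⌋ for n ∈ ℤ. Then for every τ ∈ ℍ and all ν, μ ∈ ℂ with ν+μ ∉ ℤτ+ℤ and μ−ν ∉ ℤτ+ℤ: K_{2ℓ}(τ/u, ν/u, μ/u) − K_{2ℓ}(τ/u, −ν/u, μ/u) = Σ_{s'=1}^{u} Σ_{b=0}^{u−1} e^{2iπ[(ℓ/u)(s'−1)ν + (ℓ/u)(s'+1+2b)μ − (ℓ/u)(b+1)(b+s')τ − r̄(s'+2b+1)·(ν+μ−(b+1)τ)]} ·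 ( K_{2ℓ}(uτ, ν + ((s'−1)/2)τ − (u/(2ℓ)) r̄(s'+2b+1) τ, μ − ((s'+1)/2)τ − bτ + (u/(2ℓ)) r̄(s'+2b+1) τ) − e^{4iπ ν r̄(s'+2b+1) + 2iπ(s'−1) r̄(s'+2b+1) τ} K_{2ℓ}(uτ, −ν − ((s'−1)/2)τ − (u/(2ℓ)) r̄(s'+2b+1) τ, μ − ((s'+1)/2)τ − bτ + (u/(2ℓ)) r̄(s'+2b+1) τ) ). -/
open Complex Real MeasureTheory Finset

/-!
Put `e(t) = exp(2πit)` and `x = e((ν + μ + mτ)/u)`. Expanding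
`1/(1 - x) = (1 + x + ⋯ + x^(u-1))/(1 - x^u)` turns `K_{2ℓ}(τ/u, ν/u, μ/u)` into a double sum
over `j ∈ [0, u)` and `m ∈ ℤ` whose denominators `1 - e(ν + μ + mτ)` no longer involve `u`.
Splitting `m` by its residue `c` mod `u`, each `(j, c)`-block is, up to an exponential factor, a
level-`2ℓ` Appell function at `uτ`; the same holds for `K_{2ℓ}(τ/u, -ν/u, μ/u)` with `-ν` for `ν`.
The pairs `(s', b)` enumerate the blocks through `(j, c) ≡ (ℓ(s'+2b+1), -(b+1))`, resp.
`(ℓ(s'+2b+1), -(s'+b))`, mod `u`: both maps are bijections of `(ℤ/u)²` since their linear parts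
have determinant `∓ℓ`, a unit as `gcd(ℓ, u) = 1`, and `j = ℓ(s'+2b+1) - u r̄(s'+2b+1)` is the least
residue.
-/

open Filter Asymptotics Topology

lemma cexp_two_pi_I_mul_ne_one {τ w : ℂ} (h : ∀ m n : ℤ, w ≠ m * τ + n) (m : ℤ) :
    cexp (2 * π * I * (w + m * τ)) ≠ 1 := by
  rw [Ne, Complex.exp_eq_one_iff]
  rintro ⟨n, hn⟩
  apply h (-m) n
  have h2pi : (2 * π * I : ℂ) ≠ 0 := by simp [Real.pi_ne_zero, I_ne_zero]
  have := mul_left_cancel₀ h2pi (hn.trans (mul_comm _ _))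
  push_cast
  linear_combination this

lemma isBigO_inv_one_sub_cexp {τ : ℂ} (hτ : 0 < τ.im) (w : ℂ) :
    (fun m : ℤ => (1 - cexp (2 * π * I * (w + m * τ)))⁻¹) =O[cofinite] (fun _ => (1 : ℝ)) := by
  have hre (m : ℤ) : (2 * π * I * (w + m * τ)).re = -(2 * π) * (w.im + m * τ.im) := by
    simp [Complex.mul_re, Complex.mul_im]
  have hlin : Tendsto (fun m : ℤ => w.im + m * τ.im) atTop atTop :=
    tendsto_atTop_add_const_left _ _ (tendsto_intCast_atTop_atTop.atTop_mul_const hτ)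
  rw [Int.cofinite_eq, isBigO_sup]
  constructor
  · have hlin' : Tendsto (fun m : ℤ => w.im + m * τ.im) atBot atBot :=
      tendsto_atBot_add_const_left _ _
        (tendsto_intCast_atBot_iff.2 tendsto_id |>.atBot_mul_const hτ)
    have hexp :
        Tendsto (fun m : ℤ => cexp (2 * π * I * (w + m * τ))) atBot (Bornology.cobounded ℂ) :=
      tendsto_exp_comap_re_atTop.comp <| tendsto_comap_iff.2 <| by
        simp only [Function.comp_def, hre]
        exact hlin'.const_mul_atBot_of_neg (by linarith [Real.pi_pos])
    exact (tendsto_inv₀_cobounded.comp ((tendsto_const_sub_cobounded 1).comp hexp)).isBigO_one ℝ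
  · have hexp : Tendsto (fun m : ℤ => cexp (2 * π * I * (w + m * τ))) atTop (𝓝 0) := by
      rw [tendsto_exp_nhds_zero_iff]
      simp only [hre]
      exact hlin.const_mul_atTop_of_neg (by linarith [Real.pi_pos])
    exact ((tendsto_const_nhds.sub hexp).inv₀ (by simp)).isBigO_one ℝ

lemma summable_cexp_quadratic_div_one_sub_cexp {a τ : ℂ} (ha : 0 < a.im) (hτ : 0 < τ.im)
    (b c w : ℂ) :
    Summable fun m : ℤ =>
      cexp (2 * π * I * (a * m ^ 2 + b * m + c)) / (1 - cexp (2 * π * I * (w + m * τ))) := by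
  have htheta : Summable fun m : ℤ => ‖jacobiTheta₂_term m b (2 * a)‖ :=
    ((summable_jacobiTheta₂_term_iff b (2 * a)).2 (by simpa using ha)).norm
  refine summable_of_isBigO htheta ?_
  have hsplit : (fun m : ℤ =>
      cexp (2 * π * I * (a * m ^ 2 + b * m + c)) / (1 - cexp (2 * π * I * (w + m * τ)))) =
      fun m => cexp (2 * π * I * c) *
        (jacobiTheta₂_term m b (2 * a) * (1 - cexp (2 * π * I * (w + m * τ)))⁻¹) := by
    ext m
    rw [jacobiTheta₂_term, div_eq_mul_inv, ← mul_assoc, ← Complex.exp_add]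
    ring_nf
  rw [hsplit]
  simpa using ((isBigO_refl _ _).norm_right.mul (isBigO_inv_one_sub_cexp hτ w)).const_mul_left _

lemma div_one_sub_eq_sum_div_one_sub_pow {K : Type*} [Field K] {x : K} {n : ℕ}
    (h : 1 - x ^ n ≠ 0) (N : K) :
    N / (1 - x) = ∑ j ∈ range n, N * x ^ j / (1 - x ^ n) := by
  have hx : 1 - x ≠ 0 := fun hx => h (by rw [← sub_eq_zero.1 hx, one_pow, sub_self])
  rw [← sum_div, ← mul_sum, div_eq_div_iff hx h]
  linear_combination N * geom_sum_mul x n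

noncomputable def appellBlowUpTerm (ℓ u : ℕ) (τ z μ : ℂ) (j m : ℤ) : ℂ :=
  cexp (2 * π * I * (((ℓ * m ^ 2 + j * m) * τ + (2 * ℓ * m + j) * z + j * μ) / u)) /
    (1 - cexp (2 * π * I * (z + μ + m * τ)))

lemma summable_appellBlowUpTerm {ℓ u : ℕ} [NeZero u] (hℓ : 0 < ℓ) {τ : ℂ} (hτ : 0 < τ.im)
    (z μ : ℂ) (j : ℤ) : Summable (appellBlowUpTerm ℓ u τ z μ j) := by
  have ha : 0 < (ℓ * τ / u).im := by
    simp only [Complex.div_natCast_im, Complex.mul_im, natCast_re, natCast_im, zero_mul, add_zero]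
    have := Nat.pos_of_neZero u
    positivity
  refine (summable_cexp_quadratic_div_one_sub_cexp ha hτ ((j * τ + 2 * ℓ * z) / u)
    (j * (z + μ) / u) (z + μ)).congr fun m => ?_
  rw [appellBlowUpTerm]
  ring_nf

lemma appellK_div_eq_sum_tsum_appellBlowUpTerm {ℓ u : ℕ} [NeZero u] (hℓ : 0 < ℓ) {τ z μ : ℂ}
    (hτ : 0 < τ.im) (hz : ∀ m n : ℤ, z + μ ≠ m * τ + n) :
    appellK (2 * ℓ) (τ / u) (z / u) (μ / u) =
      ∑ j ∈ range u, ∑' m : ℤ, appellBlowUpTerm ℓ u τ z μ j m := by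
  rw [← Summable.tsum_finsetSum (f := fun (j : ℕ) m => appellBlowUpTerm ℓ u τ z μ j m)
    fun j _ => summable_appellBlowUpTerm hℓ hτ z μ j, appellK]
  refine tsum_congr fun m => ?_
  set x := cexp (2 * π * I * ((z + μ + m * τ) / u))
  have hxu : x ^ u = cexp (2 * π * I * (z + μ + m * τ)) := by
    rw [← Complex.exp_nat_mul]
    congr 1
    field_simp [NeZero.ne (u : ℂ)]
  have hden : 1 - x ^ u ≠ 0 := by
    rw [hxu, sub_ne_zero, ne_comm]
    exact cexp_two_pi_I_mul_ne_one hz m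
  rw [show 2 * π * I * (z / u + μ / u + m * (τ / u)) = 2 * π * I * ((z + μ + m * τ) / u) by ring,
    div_one_sub_eq_sum_div_one_sub_pow hden]
  refine sum_congr rfl fun j _ => ?_
  rw [appellBlowUpTerm, hxu, ← Complex.exp_nat_mul, ← Complex.exp_add]
  push_cast
  ring_nf

lemma sum_zmod_val_eq_sum_range {M : Type*} [AddCommMonoid M] (u : ℕ) [NeZero u] (g : ℕ → M) :
    ∑ j : ZMod u, g j.val = ∑ j ∈ range u, g j := by
  obtain ⟨n, rfl⟩ := Nat.exists_eq_succ_of_ne_zero (NeZero.ne u)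
  exact Fin.sum_univ_eq_sum_range g (n + 1)

lemma tsum_eq_sum_zmod_tsum (u : ℕ) [NeZero u] {f : ℤ → ℂ} (hf : Summable f) :
    ∑' m, f m = ∑ c : ZMod u, ∑' n : ℤ, f (n * u + c.val) := by
  let e : Fin u × ℤ ≃ ℤ := (Equiv.prodComm _ _).trans (Int.divModEquiv u).symm
  rw [← e.tsum_eq, Summable.tsum_prod (f := fun p => f (e p)) (e.summable_iff.2 hf), tsum_fintype,
    sum_zmod_val_eq_sum_range u fun c => ∑' n : ℤ, f (n * u + c), ← Fin.sum_univ_eq_sum_range]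
  rfl

lemma tsum_mul_add_val_intCast (u : ℕ) [NeZero u] (f : ℤ → ℂ) (c : ℤ) :
    ∑' n : ℤ, f (n * u + (c : ZMod u).val) = ∑' n : ℤ, f (n * u + c) := by
  rw [← (Equiv.subRight (c / u)).tsum_eq (fun n => f (n * u + c)), ZMod.val_intCast]
  refine tsum_congr fun n => congrArg f ?_
  simp only [Equiv.subRight_apply]
  linear_combination Int.mul_ediv_add_emod c u

lemma tsum_appellBlowUpTerm_mul_add {ℓ u : ℕ} (hℓ : ℓ ≠ 0) (hu : u ≠ 0) (τ z μ : ℂ) (j c : ℤ) :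
    ∑' n : ℤ, appellBlowUpTerm ℓ u τ z μ j (n * u + c) =
      cexp (2 * π * I * (((ℓ * c ^ 2 + j * c) * τ + (2 * ℓ * c + j) * z + j * μ) / u)) *
        appellK (2 * ℓ) (u * τ) (z + c * τ + j * τ / (2 * ℓ)) (μ - j * τ / (2 * ℓ)) := by
  rw [appellK, ← tsum_mul_left]
  refine tsum_congr fun n => ?_
  rw [appellBlowUpTerm, ← mul_div_assoc (cexp _), ← Complex.exp_add]
  have hℓ' : (ℓ : ℂ) ≠ 0 := Nat.cast_ne_zero.2 hℓ
  have hu' : (u : ℂ) ≠ 0 := Nat.cast_ne_zero.2 hu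
  congr 2
  · push_cast
    field_simp
    ring
  · congr 2
    push_cast
    ring

noncomputable def appellBlowUpBlock (ℓ u : ℕ) [NeZero u] (τ z μ : ℂ) (j c : ZMod u) : ℂ :=
  ∑' n : ℤ, appellBlowUpTerm ℓ u τ z μ j.val (n * u + c.val)

lemma appellBlowUpBlock_intCast {ℓ u : ℕ} [NeZero u] (hℓ : ℓ ≠ 0) (τ z μ : ℂ) (k c : ℤ) :
    appellBlowUpBlock ℓ u τ z μ k c =
      cexp (2 * π * I * (((ℓ * c ^ 2 + (k % u : ℤ) * c) * τ + (2 * ℓ * c + (k % u : ℤ)) * z +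
        (k % u : ℤ) * μ) / u)) *
        appellK (2 * ℓ) (u * τ) (z + c * τ + (k % u : ℤ) * τ / (2 * ℓ))
          (μ - (k % u : ℤ) * τ / (2 * ℓ)) := by
  rw [appellBlowUpBlock, tsum_mul_add_val_intCast, ZMod.val_intCast,
    tsum_appellBlowUpTerm_mul_add hℓ (NeZero.ne u)]

lemma appellK_div_eq_sum_appellBlowUpBlock {ℓ u : ℕ} [NeZero u] (hℓ : 0 < ℓ) {τ z μ : ℂ}
    (hτ : 0 < τ.im) (hz : ∀ m n : ℤ, z + μ ≠ m * τ + n) :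
    appellK (2 * ℓ) (τ / u) (z / u) (μ / u) = ∑ j, ∑ c, appellBlowUpBlock ℓ u τ z μ j c := by
  rw [appellK_div_eq_sum_tsum_appellBlowUpTerm hℓ hτ hz, ← sum_zmod_val_eq_sum_range u]
  exact sum_congr rfl fun j _ => tsum_eq_sum_zmod_tsum u (summable_appellBlowUpTerm hℓ hτ z μ _)

section Reindexing

variable {M : Type*} [AddCommMonoid M]

lemma sum_Icc_intCast_eq_sum_zmod (u : ℕ) [NeZero u] {a b : ℤ} (hab : b + 1 = a + u)
    (f : ZMod u → M) : ∑ x ∈ Icc a b, f x = ∑ y, f y := by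
  refine sum_nbij' (fun x => (x : ZMod u)) (fun y => a + ((y - (a : ZMod u)).val : ℤ))
    (fun _ _ => mem_univ _) (fun y _ => ?_) (fun x hx => ?_) (fun y _ => ?_) (fun _ _ => rfl)
  · have := ZMod.val_lt (y - (a : ZMod u))
    rw [mem_Icc]
    omega
  · rw [mem_Icc] at hx
    rw [← Int.cast_sub, ZMod.val_intCast, Int.emod_eq_of_lt (by omega) (by omega)]
    ring
  · simp

lemma sum_sum_affine_comp {R : Type*} [CommRing R] [Fintype R] {α β γ δ : R}
    (hdet : IsUnit (α * δ - β * γ)) (e f : R) (H : R → R → M) :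
    ∑ s, ∑ b, H (α * s + β * b + e) (γ * s + δ * b + f) = ∑ j, ∑ c, H j c := by
  have hinj : Function.Injective fun p : R × R =>
      (α * p.1 + β * p.2 + e, γ * p.1 + δ * p.2 + f) := by
    rintro ⟨s, b⟩ ⟨s', b'⟩ h
    obtain ⟨h₁, h₂⟩ := Prod.mk.inj h
    have hs : (α * δ - β * γ) * (s - s') = 0 := by linear_combination δ * h₁ - β * h₂
    have hb : (α * δ - β * γ) * (b - b') = 0 := by linear_combination α * h₂ - γ * h₁
    rw [hdet.mul_right_eq_zero, sub_eq_zero] at hs hb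
    rw [hs, hb]
  simp only [← Fintype.sum_prod_type']
  exact (Finite.injective_iff_bijective.1 hinj).sum_comp fun p => H p.1 p.2

lemma sum_Icc_sum_Icc_eq_sum_zmod (u : ℕ) [NeZero u] (F : ZMod u → ZMod u → M) :
    ∑ s ∈ Icc (1 : ℤ) u, ∑ b ∈ Icc (0 : ℤ) (u - 1), F s b = ∑ s, ∑ b, F s b := calc
  _ = ∑ s ∈ Icc (1 : ℤ) u, ∑ b, F s b :=
    sum_congr rfl fun s _ => sum_Icc_intCast_eq_sum_zmod u (by ring) (F s)
  _ = _ := sum_Icc_intCast_eq_sum_zmod u (by ring) fun s => ∑ b, F s b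

variable {ℓ u : ℕ} [NeZero u]

lemma sum_Icc_sum_Icc_reindex_blowUp_plus (hcop : ℓ.Coprime u) (H : ZMod u → ZMod u → M) :
    ∑ s ∈ Icc (1 : ℤ) u, ∑ b ∈ Icc (0 : ℤ) (u - 1),
      H ((ℓ * (s + 2 * b + 1) : ℤ) : ZMod u) ((-(b + 1) : ℤ) : ZMod u) = ∑ j, ∑ c, H j c := by
  have hdet : IsUnit ((ℓ : ZMod u) * -1 - 2 * ℓ * 0) := by
    simpa using (ZMod.unitOfCoprime ℓ hcop).isUnit.neg
  rw [← sum_sum_affine_comp hdet ℓ (-1) H, ← sum_Icc_sum_Icc_eq_sum_zmod]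
  push_cast
  refine sum_congr rfl fun s _ => sum_congr rfl fun b _ => ?_
  congr 1 <;> ring

lemma sum_Icc_sum_Icc_reindex_blowUp_minus (hcop : ℓ.Coprime u) (H : ZMod u → ZMod u → M) :
    ∑ s ∈ Icc (1 : ℤ) u, ∑ b ∈ Icc (0 : ℤ) (u - 1),
      H ((ℓ * (s + 2 * b + 1) : ℤ) : ZMod u) ((-(s + b) : ℤ) : ZMod u) = ∑ j, ∑ c, H j c := by
  have hdet : IsUnit ((ℓ : ZMod u) * -1 - 2 * ℓ * -1) := by
    simpa [two_mul] using (ZMod.unitOfCoprime ℓ hcop).isUnit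
  rw [← sum_sum_affine_comp hdet ℓ 0 H, ← sum_Icc_sum_Icc_eq_sum_zmod]
  push_cast
  refine sum_congr rfl fun s _ => sum_congr rfl fun b _ => ?_
  congr 1 <;> ring

end Reindexing

lemma appellK_blowUp_summand_eq {ℓ u : ℕ} [NeZero u] (hℓ : ℓ ≠ 0) (τ ν μ : ℂ) (s' b : ℤ) :
    Complex.exp (2 * (π : ℂ) * I *
          ((ℓ : ℂ) / u * ((s' : ℂ) - 1) * ν + (ℓ : ℂ) / u * ((s' : ℂ) + 1 + 2 * (b : ℂ)) * μ -
            (ℓ : ℂ) / u * ((b : ℂ) + 1) * ((b : ℂ) + (s' : ℂ)) * τ -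
            ((((ℓ : ℤ) * (s' + 2 * b + 1)).fdiv (u : ℤ) : ℤ) : ℂ) *
              (ν + μ - ((b : ℂ) + 1) * τ))) *
        (appellK (2 * ℓ) ((u : ℂ) * τ)
            (ν + ((s' : ℂ) - 1) / 2 * τ -
              (u : ℂ) / (2 * ℓ) * ((((ℓ : ℤ) * (s' + 2 * b + 1)).fdiv (u : ℤ) : ℤ) : ℂ) * τ)
            (μ - ((s' : ℂ) + 1) / 2 * τ - (b : ℂ) * τ +
              (u : ℂ) / (2 * ℓ) * ((((ℓ : ℤ) * (s' + 2 * b + 1)).fdiv (u : ℤ) : ℤ) : ℂ) * τ) -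
          Complex.exp (4 * (π : ℂ) * I * ν * ((((ℓ : ℤ) * (s' + 2 * b + 1)).fdiv (u : ℤ) : ℤ) : ℂ) +
              2 * (π : ℂ) * I * ((s' : ℂ) - 1) *
                ((((ℓ : ℤ) * (s' + 2 * b + 1)).fdiv (u : ℤ) : ℤ) : ℂ) * τ) *
            appellK (2 * ℓ) ((u : ℂ) * τ)
              (-ν - ((s' : ℂ) - 1) / 2 * τ -
                (u : ℂ) / (2 * ℓ) * ((((ℓ : ℤ) * (s' + 2 * b + 1)).fdiv (u : ℤ) : ℤ) : ℂ) * τ)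
              (μ - ((s' : ℂ) + 1) / 2 * τ - (b : ℂ) * τ +
                (u : ℂ) / (2 * ℓ) * ((((ℓ : ℤ) * (s' + 2 * b + 1)).fdiv (u : ℤ) : ℤ) : ℂ) * τ)) =
      appellBlowUpBlock ℓ u τ ν μ ((ℓ * (s' + 2 * b + 1) : ℤ) : ZMod u) ((-(b + 1) : ℤ) : ZMod u) -
        appellBlowUpBlock ℓ u τ (-ν) μ ((ℓ * (s' + 2 * b + 1) : ℤ) : ZMod u)
          ((-(s' + b) : ℤ) : ZMod u) := by
  have hℓ' : (ℓ : ℂ) ≠ 0 := Nat.cast_ne_zero.2 hℓ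
  have hu' : (u : ℂ) ≠ 0 := NeZero.ne _
  have hmod : (ℓ * (s' + 2 * b + 1)) % (u : ℤ) =
      ℓ * (s' + 2 * b + 1) - u * (((ℓ : ℤ) * (s' + 2 * b + 1)).fdiv u) := by
    rw [Int.fdiv_eq_ediv_of_nonneg _ (Int.natCast_nonneg u), Int.emod_def]
  rw [appellBlowUpBlock_intCast hℓ, appellBlowUpBlock_intCast hℓ, hmod, mul_sub, ← mul_assoc,
    ← Complex.exp_add]
  congr 2 <;> congr 1 <;> push_cast <;> field_simp <;> ring

theorem appellK_blow_u (ℓ u : ℕ) (hℓ : 0 < ℓ) (hu : 0 < u) (hcop : Nat.Coprime ℓ u)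
    (τ ν μ : ℂ) (hτ : 0 < τ.im)
    (h1 : ∀ m n : ℤ, ν + μ ≠ (m : ℂ) * τ + (n : ℂ))
    (h2 : ∀ m n : ℤ, μ - ν ≠ (m : ℂ) * τ + (n : ℂ)) :
    appellK (2 * ℓ) (τ / u) (ν / u) (μ / u) - appellK (2 * ℓ) (τ / u) (-ν / u) (μ / u) =
      ∑ s' ∈ Finset.Icc (1 : ℤ) (u : ℤ), ∑ b ∈ Finset.Icc (0 : ℤ) ((u : ℤ) - 1),
        Complex.exp (2 * (π : ℂ) * I *
          ((ℓ : ℂ) / u * ((s' : ℂ) - 1) * ν + (ℓ : ℂ) / u * ((s' : ℂ) + 1 + 2 * (b : ℂ)) * μ -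
            (ℓ : ℂ) / u * ((b : ℂ) + 1) * ((b : ℂ) + (s' : ℂ)) * τ -
            ((((ℓ : ℤ) * (s' + 2 * b + 1)).fdiv (u : ℤ) : ℤ) : ℂ) *
              (ν + μ - ((b : ℂ) + 1) * τ))) *
        (appellK (2 * ℓ) ((u : ℂ) * τ)
            (ν + ((s' : ℂ) - 1) / 2 * τ -
              (u : ℂ) / (2 * ℓ) * ((((ℓ : ℤ) * (s' + 2 * b + 1)).fdiv (u : ℤ) : ℤ) : ℂ) * τ)
            (μ - ((s' : ℂ) + 1) / 2 * τ - (b : ℂ) * τ +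
              (u : ℂ) / (2 * ℓ) * ((((ℓ : ℤ) * (s' + 2 * b + 1)).fdiv (u : ℤ) : ℤ) : ℂ) * τ) -
          Complex.exp (4 * (π : ℂ) * I * ν * ((((ℓ : ℤ) * (s' + 2 * b + 1)).fdiv (u : ℤ) : ℤ) : ℂ) +
              2 * (π : ℂ) * I * ((s' : ℂ) - 1) *
                ((((ℓ : ℤ) * (s' + 2 * b + 1)).fdiv (u : ℤ) : ℤ) : ℂ) * τ) *
            appellK (2 * ℓ) ((u : ℂ) * τ)
              (-ν - ((s' : ℂ) - 1) / 2 * τ -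
                (u : ℂ) / (2 * ℓ) * ((((ℓ : ℤ) * (s' + 2 * b + 1)).fdiv (u : ℤ) : ℤ) : ℂ) * τ)
              (μ - ((s' : ℂ) + 1) / 2 * τ - (b : ℂ) * τ +
                (u : ℂ) / (2 * ℓ) * ((((ℓ : ℤ) * (s' + 2 * b + 1)).fdiv (u : ℤ) : ℤ) : ℂ) * τ)) := by
  have : NeZero u := ⟨hu.ne'⟩
  have h2' : ∀ m n : ℤ, -ν + μ ≠ m * τ + n := fun m n => by rw [neg_add_eq_sub]; exact h2 m n
  rw [appellK_div_eq_sum_appellBlowUpBlock hℓ hτ h1, appellK_div_eq_sum_appellBlowUpBlock hℓ hτ h2',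
    ← sum_Icc_sum_Icc_reindex_blowUp_plus hcop, ← sum_Icc_sum_Icc_reindex_blowUp_minus hcop,
    ← sum_sub_distrib]
  refine sum_congr rfl fun s' _ => ?_
  rw [← sum_sub_distrib]
  exact sum_congr rfl fun b _ => (appellK_blowUp_summand_eq hℓ.ne' τ ν μ s' b).symm
end

section
/- For every τ ∈ ℍ, every μ ∈ ℂ, and every positive integer m: Φ(τ, μ + mτ) = Φ(τ, μ) − Σ_{j=1}^{m} e^{−iπ(μ + jτ)²/τ}, and Φ(τ, μ − mτ) = Φ(τ, μ) + Σ_{j=0}^{m−1} e^{−iπ(μ − jτ)²/τ}. -/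
open Complex Real MeasureTheory Finset

/-!
Write `w = (-iτ)^(1/2)` and `c = 1 + 2μ/τ`; the shift `μ ↦ μ + τ` turns `c` into `c + 2`. Since
`sinh (s (c + 2)) - sinh (s c) = 2 cosh (s (c + 1)) sinh s`, the integrand changes by
`2 e^{-πx²} cosh (π w (c + 1) x)`, whose integral is the Gaussian value `2 e^{π w² (c + 1)² / 4}`,
and `w² = -iτ` turns this into `2 e^{-πi(μ + τ)²/τ}`. Hence
`Φ(τ, μ + τ) = Φ(τ, μ) - e^{-πi(μ + τ)²/τ}`, and both formulas follow by telescoping. Splitting the integral is legitimate because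
`|sinh (a x) / sinh (b x)| ≤ (|a| / Re b) e^{|a| |x|}` when `Re b > 0`, so the integrands are
dominated by Gaussians.
-/

namespace Complex

lemma sinh_add_sub_sinh_sub (x y : ℂ) :
    sinh (x + y) - sinh (x - y) = 2 * cosh x * sinh y := by
  rw [sinh_add, sinh_sub]
  ring

lemma abs_re_le_norm_sinh (z : ℂ) : |z.re| ≤ ‖sinh z‖ :=
  calc |z.re| ≤ Real.sinh |z.re| := Real.self_le_sinh_iff.2 (abs_nonneg _)
    _ = |‖cexp z‖ - ‖cexp (-z)‖| / 2 := by
      rw [← Real.abs_sinh, Real.sinh_eq, abs_div, norm_exp, norm_exp, neg_re, abs_two]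
    _ ≤ ‖cexp z - cexp (-z)‖ / 2 := by gcongr; exact abs_norm_sub_norm_le _ _
    _ = ‖sinh z‖ := by rw [sinh, norm_div, Complex.norm_two]

lemma norm_sinh_le (z : ℂ) : ‖sinh z‖ ≤ ‖z‖ * Real.exp ‖z‖ := by
  have h := norm_exp_sub_sum_le_norm_mul_exp z 1
  have h' := norm_exp_sub_sum_le_norm_mul_exp (-z) 1
  simp only [Finset.range_one, Finset.sum_singleton, pow_zero, Nat.factorial_zero, Nat.cast_one,
    div_one, pow_one, norm_neg] at h h'
  calc ‖sinh z‖ = ‖(cexp z - 1) - (cexp (-z) - 1)‖ / 2 := by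
        rw [sinh, norm_div, Complex.norm_two, sub_sub_sub_cancel_right]
    _ ≤ (‖cexp z - 1‖ + ‖cexp (-z) - 1‖) / 2 := by gcongr; exact norm_sub_le _ _
    _ ≤ ‖z‖ * Real.exp ‖z‖ := by linarith

lemma re_mul_abs_le_norm_sinh_mul_ofReal {b : ℂ} (hb : 0 ≤ b.re) (x : ℝ) :
    b.re * |x| ≤ ‖sinh (b * x)‖ := by
  have h := abs_re_le_norm_sinh (b * x)
  rwa [re_mul_ofReal, abs_mul, abs_of_nonneg hb] at h

lemma sinh_mul_ofReal_ne_zero {b : ℂ} (hb : 0 < b.re) {x : ℝ} (hx : x ≠ 0) :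
    sinh (b * x) ≠ 0 :=
  norm_pos_iff.1 ((mul_pos hb (abs_pos.2 hx)).trans_le (re_mul_abs_le_norm_sinh_mul_ofReal hb.le x))

lemma norm_sinh_mul_div_sinh_mul_le {b : ℂ} (hb : 0 < b.re) (a : ℂ) (x : ℝ) :
    ‖sinh (a * x) / sinh (b * x)‖ ≤ ‖a‖ / b.re * Real.exp (‖a‖ * |x|) := by
  rcases eq_or_ne x 0 with rfl | hx
  · simp only [ofReal_zero, mul_zero, sinh_zero, div_zero, norm_zero]
    positivity
  have hden := re_mul_abs_le_norm_sinh_mul_ofReal hb.le x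
  have hnum : ‖sinh (a * x)‖ ≤ ‖a‖ * |x| * Real.exp (‖a‖ * |x|) := by
    simpa [norm_mul] using norm_sinh_le (a * x)
  rw [norm_div]
  calc ‖sinh (a * x)‖ / ‖sinh (b * x)‖
      ≤ ‖a‖ * |x| * Real.exp (‖a‖ * |x|) / (b.re * |x|) := by
        gcongr
    _ = ‖a‖ / b.re * Real.exp (‖a‖ * |x|) := by
        field_simp

lemma cpow_one_half_mul_self (z : ℂ) : z ^ (1 / 2 : ℂ) * z ^ (1 / 2 : ℂ) = z := by
  have h := cpow_nat_inv_pow z two_ne_zero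
  rwa [Nat.cast_ofNat, sq, ← one_div] at h

lemma re_cpow_one_half_pos {z : ℂ} (hz : z ∈ slitPlane) : 0 < (z ^ (1 / 2 : ℂ)).re := by
  rw [cpow_def_of_ne_zero (slitPlane_ne_zero hz), exp_re]
  refine mul_pos (Real.exp_pos _) (Real.cos_pos_of_mem_Ioo ?_)
  have him : (log z * (1 / 2)).im = arg z / 2 := by simp [log_im]; ring
  rw [him]
  constructor <;> linarith [neg_pi_lt_arg z, (arg_le_pi z).lt_of_ne (mem_slitPlane_iff_arg.1 hz).1]

lemma re_ofReal_pi_mul_pos {w : ℂ} (hw : 0 < w.re) : 0 < ((π : ℂ) * w).re := by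
  simpa [re_ofReal_mul] using mul_pos pi_pos hw

end Complex

lemma integrable_exp_neg_mul_sq_add_mul {b : ℝ} (hb : 0 < b) (c : ℝ) :
    Integrable fun x : ℝ => Real.exp (-b * x ^ 2 + c * x) := by
  refine (integrable_cexp_quadratic (b := b) (by simpa using hb) c 0).norm.congr
    (Filter.Eventually.of_forall fun x => ?_)
  simp only [Complex.norm_exp, add_zero]
  norm_cast

lemma integral_cexp_neg_pi_mul_sq_add_mul (c : ℂ) :
    ∫ x : ℝ, cexp (-π * x ^ 2 + c * x) = cexp (c ^ 2 / (4 * π)) := by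
  have hπ : (π : ℂ) ≠ 0 := ofReal_ne_zero.2 pi_ne_zero
  have h := integral_cexp_quadratic (b := -π) (by simpa using pi_pos) c 0
  simp only [add_zero, neg_neg, div_self hπ, one_cpow, one_mul] at h
  rw [h]
  congr 1
  field_simp
  ring

lemma integral_cexp_neg_pi_mul_sq_mul_cosh (q : ℂ) :
    ∫ x : ℝ, cexp (-π * x ^ 2) * Complex.cosh (q * x) = cexp (q ^ 2 / (4 * π)) := by
  have hint : ∀ c : ℂ, Integrable fun x : ℝ => cexp (-π * x ^ 2 + c * x) := fun c => by
    simpa using integrable_cexp_quadratic (b := π) (by simpa using pi_pos) c 0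
  have hsplit : ∀ x : ℝ, cexp (-π * x ^ 2) * Complex.cosh (q * x) =
      (cexp (-π * x ^ 2 + q * x) + cexp (-π * x ^ 2 + -q * x)) / 2 := fun x => by
    rw [Complex.cosh, Complex.exp_add, Complex.exp_add, neg_mul q]
    ring
  simp_rw [hsplit, integral_div, integral_add (hint q) (hint (-q)),
    integral_cexp_neg_pi_mul_sq_add_mul, neg_sq]
  ring

/-- At `x = 0` the quotient is the junk value `0 / 0 = 0` instead of its limit `c`; this null set
does not affect the integral. -/
noncomputable def sinhRatioIntegrand (w c : ℂ) (x : ℝ) : ℂ :=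
  cexp (-(π : ℂ) * (x : ℂ) ^ 2) *
    (Complex.sinh ((π : ℂ) * (x : ℂ) * w * c) / Complex.sinh ((π : ℂ) * (x : ℂ) * w))

lemma sinhRatioIntegrand_eq (w c : ℂ) (x : ℝ) : sinhRatioIntegrand w c x =
    cexp (-(π : ℂ) * (x : ℂ) ^ 2) *
      (Complex.sinh ((π * w * c) * x) / Complex.sinh ((π * w) * x)) := by
  simp only [sinhRatioIntegrand]
  ring_nf

lemma integrable_sinhRatioIntegrand {w : ℂ} (hw : 0 < w.re) (c : ℂ) :
    Integrable (sinhRatioIntegrand w c) := by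
  set A := ‖(π : ℂ) * w * c‖
  set r := ((π : ℂ) * w).re
  have hr : 0 < r := re_ofReal_pi_mul_pos hw
  refine Integrable.mono' (((integrable_exp_neg_mul_sq_add_mul pi_pos A).add
      (integrable_exp_neg_mul_sq_add_mul pi_pos (-A))).const_mul (A / r))
    (by unfold sinhRatioIntegrand; fun_prop) (Filter.Eventually.of_forall fun x => ?_)
  have hgauss : ‖cexp (-(π : ℂ) * (x : ℂ) ^ 2)‖ = Real.exp (-π * x ^ 2) := by
    rw [Complex.norm_exp]; norm_cast
  rw [sinhRatioIntegrand_eq, norm_mul, hgauss]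
  calc Real.exp (-π * x ^ 2) * ‖Complex.sinh ((π * w * c) * x) / Complex.sinh ((π * w) * x)‖
      ≤ Real.exp (-π * x ^ 2) * (A / r * Real.exp (A * |x|)) := by
        gcongr; exact norm_sinh_mul_div_sinh_mul_le hr _ x
    _ = A / r * Real.exp (-π * x ^ 2 + |A * x|) := by
        rw [Real.exp_add, abs_mul, abs_norm]; ring
    _ ≤ A / r * (Real.exp (-π * x ^ 2 + A * x) + Real.exp (-π * x ^ 2 + -A * x)) := by
        rw [Real.exp_add, Real.exp_add, Real.exp_add, neg_mul A, ← mul_add]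
        gcongr
        exact Real.exp_abs_le (A * x)

lemma sinhRatioIntegrand_add_two_sub {w : ℂ} (hw : 0 < w.re) (c : ℂ) {x : ℝ} (hx : x ≠ 0) :
    sinhRatioIntegrand w (c + 2) x - sinhRatioIntegrand w c x =
      2 * (cexp (-π * x ^ 2) * Complex.cosh ((π * w * (c + 1)) * x)) := by
  unfold sinhRatioIntegrand
  set s : ℂ := π * x * w
  have hs : Complex.sinh s ≠ 0 := by
    simpa only [s, mul_right_comm] using sinh_mul_ofReal_ne_zero (re_ofReal_pi_mul_pos hw) hx
  have hshift := Complex.sinh_add_sub_sinh_sub (s * (c + 1)) s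
  rw [show s * (c + 1) + s = s * (c + 2) by ring, show s * (c + 1) - s = s * c by ring] at hshift
  rw [← mul_sub, div_sub_div_same, hshift,
    show (π * w * (c + 1)) * (x : ℂ) = s * (c + 1) by ring]
  field_simp

lemma integral_sinhRatioIntegrand_add_two {w : ℂ} (hw : 0 < w.re) (c : ℂ) :
    ∫ x, sinhRatioIntegrand w (c + 2) x =
      (∫ x, sinhRatioIntegrand w c x) + 2 * cexp (π * w ^ 2 * (c + 1) ^ 2 / 4) := by
  have hdiff : (fun x => sinhRatioIntegrand w (c + 2) x - sinhRatioIntegrand w c x) =ᵐ[volume]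
      fun x : ℝ => 2 * (cexp (-π * x ^ 2) * Complex.cosh ((π * w * (c + 1)) * x)) := by
    filter_upwards [Measure.ae_ne volume (0 : ℝ)] with x hx
    exact sinhRatioIntegrand_add_two_sub hw c hx
  have h := integral_congr_ae hdiff
  rw [integral_sub (integrable_sinhRatioIntegrand hw _) (integrable_sinhRatioIntegrand hw c),
    integral_const_mul, integral_cexp_neg_pi_mul_sq_mul_cosh] at h
  have hπ : (π : ℂ) ≠ 0 := ofReal_ne_zero.2 pi_ne_zero
  rw [sub_eq_iff_eq_add'.1 h]
  congr 3
  field_simp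

lemma PhiFun_eq_sinhRatioIntegrand (τ μ : ℂ) :
    PhiFun τ μ = -I / (2 * (-I * τ) ^ (1 / 2 : ℂ)) -
      1 / 2 * ∫ x, sinhRatioIntegrand ((-I * τ) ^ (1 / 2 : ℂ)) (1 + 2 * μ / τ) x :=
  rfl

lemma PhiFun_add_self {τ : ℂ} (hτ : 0 < τ.im) (μ : ℂ) :
    PhiFun τ (μ + τ) = PhiFun τ μ - cexp (-π * I * (μ + τ) ^ 2 / τ) := by
  have hτ0 : τ ≠ 0 := fun h => by simp [h] at hτ
  have hslit : -I * τ ∈ slitPlane := mem_slitPlane_iff.2 (Or.inl (by simpa using hτ))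
  have hshift : 1 + 2 * (μ + τ) / τ = (1 + 2 * μ / τ) + 2 := by field_simp; ring
  have hexp : π * ((-I * τ) ^ (1 / 2 : ℂ)) ^ 2 * ((1 + 2 * μ / τ) + 1) ^ 2 / 4 =
      -π * I * (μ + τ) ^ 2 / τ := by
    rw [sq ((-I * τ) ^ (1 / 2 : ℂ)), cpow_one_half_mul_self]
    field_simp
    ring
  rw [PhiFun_eq_sinhRatioIntegrand, PhiFun_eq_sinhRatioIntegrand, hshift,
    integral_sinhRatioIntegrand_add_two (re_cpow_one_half_pos hslit), hexp]
  ring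

section Telescoping

variable {A B : Type*} [AddCommGroup B] {f g : A → B}

lemma apply_add_nsmul_eq_sub_sum [AddCommMonoid A] {τ : A}
    (h : ∀ ν, f (ν + τ) = f ν - g (ν + τ)) (μ : A) (m : ℕ) :
    f (μ + m • τ) = f μ - ∑ j ∈ Icc 1 m, g (μ + j • τ) := by
  induction m with
  | zero => simp
  | succ m ih =>
    rw [succ_nsmul, ← add_assoc, h, ih, sum_Icc_succ_top (Nat.le_add_left 1 m), succ_nsmul,
      add_assoc, sub_sub]

lemma apply_sub_nsmul_eq_add_sum [AddCommGroup A] {τ : A}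
    (h : ∀ ν, f (ν + τ) = f ν - g (ν + τ)) (μ : A) (m : ℕ) :
    f (μ - m • τ) = f μ + ∑ j ∈ range m, g (μ - j • τ) := by
  induction m with
  | zero => simp
  | succ m ih =>
    have hstep := h (μ - (m + 1) • τ)
    rw [show μ - (m + 1) • τ + τ = μ - m • τ by rw [succ_nsmul]; abel] at hstep
    rw [sum_range_succ, ← add_assoc, ← ih, hstep]
    abel

end Telescoping

theorem PhiFun_open_quasiperiodicity_general (τ μ : ℂ) (hτ : 0 < τ.im) (m : ℕ) :
    PhiFun τ (μ + (m : ℂ) * τ) =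
      PhiFun τ μ - ∑ j ∈ Finset.Icc 1 m, Complex.exp (-(π : ℂ) * I * (μ + (j : ℂ) * τ) ^ 2 / τ) ∧
    PhiFun τ (μ - (m : ℂ) * τ) =
      PhiFun τ μ + ∑ j ∈ Finset.range m, Complex.exp (-(π : ℂ) * I * (μ - (j : ℂ) * τ) ^ 2 / τ) := by
  have step := PhiFun_add_self hτ
  simp only [← nsmul_eq_mul]
  exact ⟨apply_add_nsmul_eq_sub_sum (g := fun ν => cexp (-π * I * ν ^ 2 / τ)) step μ m,
    apply_sub_nsmul_eq_add_sum (g := fun ν => cexp (-π * I * ν ^ 2 / τ)) step μ m⟩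

theorem PhiFun_open_quasiperiodicity (τ μ : ℂ) (hτ : 0 < τ.im) (m : ℕ) (hm : 0 < m) :
    PhiFun τ (μ + (m : ℂ) * τ) =
      PhiFun τ μ - ∑ j ∈ Finset.Icc 1 m, Complex.exp (-(π : ℂ) * I * (μ + (j : ℂ) * τ) ^ 2 / τ) ∧
    PhiFun τ (μ - (m : ℂ) * τ) =
      PhiFun τ μ + ∑ j ∈ Finset.range m, Complex.exp (-(π : ℂ) * I * (μ - (j : ℂ) * τ) ^ 2 / τ) :=
  PhiFun_open_quasiperiodicity_general τ μ hτ m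
end

section
/- For every τ ∈ ℍ and every μ ∈ ℂ: Φ(τ, −μ) = −i/√(−iτ) − e^{−iπ μ²/τ} − Φ(τ, μ). -/
/-!
Put `c = √(-iτ)` and `t = 2μ/τ`. The integrands of `Φ(τ, μ)` and `Φ(τ, -μ)` are
`e^{-πx²} sinh(πxc(1 ± t)) / sinh(πxc)`, and by the addition formula their sum is
`2 e^{-πx²} cosh(πxct)`, whose Gaussian integral is `2 e^{π(ct)²/4} = 2 e^{-iπμ²/τ}`
since `c² = -iτ`.
Both integrals converge because `‖sinh w‖ ≤ ‖w‖ e^{‖w‖}` and `‖sinh z‖ ≥ |Re z|` bound the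
ratio of hyperbolic sines by `C e^{C|x|}`, which the Gaussian absorbs.
-/

open Complex Real MeasureTheory Finset

namespace Complex

lemma norm_cosh_le_exp_norm (z : ℂ) : ‖cosh z‖ ≤ Real.exp ‖z‖ := by
  have h_exp (w : ℂ) (hw : ‖w‖ = ‖z‖) : ‖cexp w‖ ≤ Real.exp ‖z‖ := by
    rw [norm_exp, ← hw]
    exact Real.exp_le_exp.2 (re_le_norm w)
  calc ‖cosh z‖ = ‖cexp z + cexp (-z)‖ / 2 := by rw [cosh, norm_div]; norm_num
    _ ≤ (Real.exp ‖z‖ + Real.exp ‖z‖) / 2 := by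
        gcongr
        exact (norm_add_le _ _).trans (add_le_add (h_exp z rfl) (h_exp (-z) (norm_neg z)))
    _ = Real.exp ‖z‖ := by ring

lemma sinh_ne_zero_of_re_ne_zero {z : ℂ} (hz : z.re ≠ 0) : sinh z ≠ 0 :=
  norm_pos_iff.1 ((abs_pos.2 hz).trans_le (abs_re_le_norm_sinh z))

lemma sinh_mul_one_add_add_sinh_mul_one_sub (a t : ℂ) :
    sinh (a * (1 + t)) + sinh (a * (1 - t)) = 2 * sinh a * cosh (a * t) := by
  rw [mul_one_add, mul_one_sub, sinh_add, sinh_sub]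
  ring

end Complex

lemma norm_sinh_mul_div_sinh_le {c : ℂ} (hc : 0 < c.re) (s : ℂ) (y : ℝ) :
    ‖sinh (y * c * s) / sinh (y * c)‖ ≤ ‖c * s‖ / c.re * Real.exp (|y| * ‖c * s‖) := by
  rcases eq_or_ne y 0 with rfl | hy
  · simp only [ofReal_zero, zero_mul, Complex.sinh_zero, div_zero, norm_zero]
    positivity
  have h_num : ‖sinh (y * c * s)‖ ≤ |y| * ‖c * s‖ * Real.exp (|y| * ‖c * s‖) := by
    simpa [mul_assoc] using norm_sinh_le (y * c * s)
  have h_den : |y| * c.re ≤ ‖sinh (y * c)‖ := by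
    simpa [abs_mul, abs_of_pos hc] using abs_re_le_norm_sinh (y * c)
  rw [norm_div]
  calc ‖sinh (y * c * s)‖ / ‖sinh (y * c)‖
      ≤ |y| * ‖c * s‖ * Real.exp (|y| * ‖c * s‖) / (|y| * c.re) := by
        gcongr
    _ = ‖c * s‖ / c.re * Real.exp (|y| * ‖c * s‖) := by field_simp

lemma integrable_exp_neg_mul_sq_add_mul_abs {a : ℝ} (ha : 0 < a) (B : ℝ) :
    Integrable (fun x : ℝ => Real.exp (-a * x ^ 2 + B * |x|)) := by
  have h_quad (b : ℝ) : Integrable (fun x : ℝ => Real.exp (-a * x ^ 2 + b * x)) := by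
    refine (integrable_cexp_quadratic (b := (a : ℂ)) (by simpa) (b : ℂ) 0).norm.congr ?_
    filter_upwards with x
    rw [norm_exp]
    simp [← ofReal_pow]
  refine ((h_quad B).add (h_quad (-B))).mono' (by fun_prop) ?_
  filter_upwards with x
  rw [Real.norm_of_nonneg (Real.exp_pos _).le, Pi.add_apply]
  rcases le_total 0 x with hx | hx
  · rw [abs_of_nonneg hx]
    linarith [Real.exp_pos (-a * x ^ 2 + -B * x)]
  · rw [abs_of_nonpos hx, mul_neg, ← neg_mul]
    linarith [Real.exp_pos (-a * x ^ 2 + B * x)]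

noncomputable def sinhRatioKernel (c s : ℂ) (x : ℝ) : ℂ :=
  cexp (-(π : ℂ) * (x : ℂ) ^ 2) *
    (sinh ((π : ℂ) * (x : ℂ) * c * s) / sinh ((π : ℂ) * (x : ℂ) * c))

lemma integrable_sinhRatioKernel {c : ℂ} (hc : 0 < c.re) (s : ℂ) :
    Integrable (sinhRatioKernel c s) := by
  refine ((integrable_exp_neg_mul_sq_add_mul_abs pi_pos (π * ‖c * s‖)).const_mul
    (‖c * s‖ / c.re)).mono' (by unfold sinhRatioKernel; fun_prop) ?_
  filter_upwards with x
  have h_ratio := norm_sinh_mul_div_sinh_le hc s (π * x)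
  have h_gauss : (-(π : ℂ) * (x : ℂ) ^ 2).re = -π * x ^ 2 := by simp [← ofReal_pow]
  rw [ofReal_mul, abs_mul, abs_of_pos pi_pos] at h_ratio
  rw [sinhRatioKernel, norm_mul, norm_exp, h_gauss, Real.exp_add]
  calc _ ≤ Real.exp (-π * x ^ 2) * (‖c * s‖ / c.re * Real.exp (π * |x| * ‖c * s‖)) := by gcongr
    _ = _ := by ring_nf

lemma integral_cexp_neg_mul_sq_mul_cosh {a : ℂ} (ha : 0 < a.re) (b : ℂ) :
    ∫ x : ℝ, cexp (-a * (x : ℂ) ^ 2) * cosh (b * x) =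
      (π / a) ^ (1 / 2 : ℂ) * cexp (b ^ 2 / (4 * a)) := by
  have ha' : (-a).re < 0 := by simpa using ha
  have h_split (x : ℝ) : cexp (-a * (x : ℂ) ^ 2) * cosh (b * x) =
      (cexp (-a * x ^ 2 + b * x + 0) + cexp (-a * x ^ 2 + -b * x + 0)) / 2 := by
    rw [Complex.cosh, add_zero, add_zero, Complex.exp_add, Complex.exp_add, neg_mul b]
    ring
  simp_rw [h_split]
  rw [integral_div, integral_add (integrable_cexp_quadratic ha b 0)
    (integrable_cexp_quadratic ha (-b) 0), integral_cexp_quadratic ha' b 0,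
    integral_cexp_quadratic ha' (-b) 0, neg_neg]
  ring_nf

/-- Only almost everywhere: at `x = 0` the kernels are `0 / 0 = 0`, not their continuous
extension. -/
lemma sinhRatioKernel_add_sinhRatioKernel_ae {c : ℂ} (hc : c.re ≠ 0) (t : ℂ) :
    (fun x => sinhRatioKernel c (1 + t) x + sinhRatioKernel c (1 - t) x) =ᵐ[volume]
      fun x : ℝ => 2 * (cexp (-(π : ℂ) * (x : ℂ) ^ 2) * cosh ((π : ℂ) * c * t * x)) := by
  filter_upwards [Measure.ae_ne volume 0] with x hx
  have h_sinh : sinh ((π : ℂ) * x * c) ≠ 0 := by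
    apply sinh_ne_zero_of_re_ne_zero
    simp [hx, hc, pi_ne_zero]
  simp only [sinhRatioKernel, ← mul_add, ← add_div, sinh_mul_one_add_add_sinh_mul_one_sub]
  field_simp

lemma integral_sinhRatioKernel_add_integral {c : ℂ} (hc : 0 < c.re) (t : ℂ) :
    (∫ x, sinhRatioKernel c (1 + t) x) + ∫ x, sinhRatioKernel c (1 - t) x =
      2 * cexp (π * (c * t) ^ 2 / 4) := by
  have hπ : 0 < (π : ℂ).re := by simpa using pi_pos
  rw [← integral_add (integrable_sinhRatioKernel hc _) (integrable_sinhRatioKernel hc _),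
    integral_congr_ae (sinhRatioKernel_add_sinhRatioKernel_ae hc.ne' t), integral_const_mul,
    integral_cexp_neg_mul_sq_mul_cosh hπ, div_self (ofReal_ne_zero.2 pi_ne_zero), one_cpow,
    one_mul]
  congr 2
  field_simp

lemma re_cpow_one_half_pos {z : ℂ} (hz : 0 < z.re) : 0 < (z ^ (1 / 2 : ℂ)).re := by
  rw [one_div, cpow_inv_two_re]
  exact Real.sqrt_pos.2 (by linarith [abs_re_le_norm z, le_abs_self z.re])

lemma PhiFun_eq_sinhRatioKernel (τ μ : ℂ) :
    PhiFun τ μ = -I / (2 * (-I * τ) ^ (1 / 2 : ℂ)) -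
      1 / 2 * ∫ x, sinhRatioKernel ((-I * τ) ^ (1 / 2 : ℂ)) (1 + 2 * μ / τ) x :=
  rfl

theorem PhiFun_reflection (τ μ : ℂ) (hτ : 0 < τ.im) :
    PhiFun τ (-μ) =
      -I / (-I * τ) ^ (1/2 : ℂ) - Complex.exp (-(π : ℂ) * I * μ ^ 2 / τ) - PhiFun τ μ := by
  have hτ0 : τ ≠ 0 := by rintro rfl; simp at hτ
  set c := (-I * τ) ^ (1 / 2 : ℂ) with hc
  have hc_re : 0 < c.re := re_cpow_one_half_pos (by simpa using hτ)
  have hc_sq : c ^ 2 = -I * τ := by rw [hc, one_div, cpow_ofNat_inv_pow]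
  have h_exponent : π * (c * (2 * μ / τ)) ^ 2 / 4 = -π * I * μ ^ 2 / τ := by
    rw [mul_pow, hc_sq]
    field_simp
    ring
  have h_sum := integral_sinhRatioKernel_add_integral hc_re (2 * μ / τ)
  rw [h_exponent] at h_sum
  rw [PhiFun_eq_sinhRatioKernel, PhiFun_eq_sinhRatioKernel, ← hc,
    show 1 + 2 * -μ / τ = 1 - 2 * μ / τ by ring]
  linear_combination (-1 / 2 : ℂ) * h_sum
end
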